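/- arXiv:2110.01151 — 6 statements merged into one kernel-verified Lean document; each statement's English description precedes it below -/
import Mathlib

section
/- For every integer t > 2, the quartic polynomial d(x) = x^4 + 2t^2x^2 - 8t^2x + t^4 + t(4x^3 - 4t^2x + 4t^2) has no real roots. -/
/-- For every integer `t > 2`, the `2`-division polynomial of the point `P + Q = (-t, -t)`
on `y² = x³ - t²x + t²`, namely
`d(x) = x⁴ + 2t²x² - 8t²x + t⁴ + t(4x³ - 4t²x + 4t²)`, has no real roots. -/
theorem dPplusQ_no_real_roots (t : ℤ) (ht : 2 < t) (x : ℝ) :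
    x ^ 4 + 2 * (t : ℝ) ^ 2 * x ^ 2 - 8 * (t : ℝ) ^ 2 * x + (t : ℝ) ^ 4
      + (t : ℝ) * (4 * x ^ 3 - 4 * (t : ℝ) ^ 2 * x + 4 * (t : ℝ) ^ 2) ≠ 0 := by
  have hs : (3:ℝ) ≤ (t:ℝ) := by exact_mod_cast ht
  set s : ℝ := (t:ℝ) with hsdef
  have hs0 : (0:ℝ) < s := by linarith
  intro h
  -- key identity: d = f² + 4s²(s - 2x) where f = x² + 2sx - s²
  have key : (x^2 + 2*s*x - s^2)^2 = 4*s^2*(2*x - s) := by nlinarith [h]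
  rcases le_total (2*x) s with hc | hc
  · -- then f² ≤ 0, so f = 0 and 2x = s, whence f = x² forces x = 0, s = 0
    have hnp : 4*s^2*(2*x - s) ≤ 0 :=
      mul_nonpos_of_nonneg_of_nonpos (by positivity) (by linarith)
    have hf0 : (x^2 + 2*s*x - s^2)^2 = 0 :=
      le_antisymm (key ▸ hnp) (sq_nonneg _)
    have hf : x^2 + 2*s*x - s^2 = 0 := by
      have := pow_eq_zero_iff (n := 2) (by norm_num) |>.mp hf0
      exact this
    have h2xs : 2*x = s := by nlinarith [key, hf0, sq_nonneg s]
    nlinarith [sq_nonneg x, hf, h2xs]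
  · set u : ℝ := 2*x - s with hu
    have hu0 : 0 ≤ u := by linarith
    have hL : (3/2)*s*u + s^2/4 ≤ x^2 + 2*s*x - s^2 := by nlinarith [sq_nonneg (x - s/2)]
    have hLpos : (0:ℝ) ≤ (3/2)*s*u + s^2/4 := by positivity
    have hLsq : ((3/2)*s*u + s^2/4)^2 ≤ (x^2 + 2*s*x - s^2)^2 := by nlinarith
    have hfin : 4*s^2*u < ((3/2)*s*u + s^2/4)^2 := by
      nlinarith [mul_nonneg (mul_nonneg hs0.le hs0.le) (sq_nonneg ((3/2)*u - 7/12)),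
        mul_nonneg (mul_nonneg hs0.le hs0.le) (mul_nonneg (by linarith : (0:ℝ) ≤ s - 3) hu0),
        mul_nonneg (mul_nonneg hs0.le hs0.le) (mul_nonneg (by linarith : (0:ℝ) ≤ s - 3) (by linarith : (0:ℝ) ≤ s + 3))]
    nlinarith [key, hLsq, hfin]
end

section
/- The polynomial equation x^4 + 2t^2x^2 - 8t^2x + t^4 = 0 has no integer solutions (t, x) with t > 2. -/
/-!
Completing the square, `d(t, x) = (x² + t²)² - 8t²x`. A zero therefore has `x > 0`, and
comparing with `(x² + t²)² ≥ (2tx)²` gives `x ≤ 2`. For `x = 1` the square `(t² + 1)²`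
already exceeds `9t²`, and for `x = 2` the equation becomes `(t² - 4)² = 0`, forcing `t = 2`.
-/

section

variable {R : Type*} [CommRing R] [LinearOrder R] [IsStrictOrderedRing R] {t x : R}

lemma pos_of_sq_add_sq_sq_eq (ht : t ≠ 0) (h : (x ^ 2 + t ^ 2) ^ 2 = 8 * t ^ 2 * x) :
    0 < x := by
  have ht2 : 0 < t ^ 2 := by positivity
  have : 0 < 8 * t ^ 2 * x := h ▸ by positivity
  exact pos_of_mul_pos_right this (by positivity)

lemma le_two_of_sq_add_sq_sq_eq (ht : t ≠ 0) (h : (x ^ 2 + t ^ 2) ^ 2 = 8 * t ^ 2 * x) :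
    x ≤ 2 := by
  have hx := pos_of_sq_add_sq_sq_eq ht h
  have ht2 : 0 < t ^ 2 := by positivity
  have amgm : 4 * t ^ 2 * x ^ 2 ≤ 8 * t ^ 2 * x := by
    rw [← h]; nlinarith [sq_nonneg (x ^ 2 - t ^ 2)]
  have : x ^ 2 ≤ 2 * x := le_of_mul_le_mul_left (by linarith) (by positivity : 0 < 4 * t ^ 2)
  nlinarith

end

/-- The equation `x⁴ + 2t²x² - 8t²x + t⁴ = 0` has no integer solutions with `t > 2`. -/
theorem dQ_no_integral_points (t x : ℤ) (ht : 2 < t) :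
    x ^ 4 + 2 * t ^ 2 * x ^ 2 - 8 * t ^ 2 * x + t ^ 4 ≠ 0 := by
  intro h
  have hsq : (x ^ 2 + t ^ 2) ^ 2 = 8 * t ^ 2 * x := by linear_combination h
  have ht0 : t ≠ 0 := by omega
  have hx0 := pos_of_sq_add_sq_sq_eq ht0 hsq
  have hx2 := le_two_of_sq_add_sq_sq_eq ht0 hsq
  interval_cases x
  · have : 3 * t < t ^ 2 + 1 := by nlinarith
    nlinarith
  · have h4 : (t ^ 2 - 4) ^ 2 = 0 := by linear_combination hsq
    nlinarith [pow_eq_zero_iff two_ne_zero |>.mp h4]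
end

section
/- The only integer solution (t, x) of the equation x^3 - t^2 x + t^2 = 0 is (t, x) = (0, 0). -/
/-!
Rewrite the equation as `x³ = (x - 1) t²`. Since `x - 1` also divides `x³ - 1`, it divides `1`,
so `x = 0` or `x = 2`. The first forces `t = 0`; the second gives `t² = 8`, impossible modulo `3`.
-/

theorem sub_one_dvd_one_of_dvd_pow {R : Type*} [CommRing R] {x : R} {n : ℕ}
    (h : x - 1 ∣ x ^ n) : x - 1 ∣ 1 := by
  have h' : x - 1 ∣ x ^ n - 1 := by simpa using sub_dvd_pow_sub_pow x 1 n
  simpa only [sub_sub_cancel] using dvd_sub h h'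

theorem Int.sq_ne_eight (t : ℤ) : t ^ 2 ≠ 8 := by
  intro h
  have h3 : (t : ZMod 3) ^ 2 = 2 := by exact_mod_cast congrArg (Int.cast : ℤ → ZMod 3) h
  generalize (t : ZMod 3) = s at h3
  revert s
  decide

/-- The only integer solution of `x³ - t²x + t² = 0` is `(t, x) = (0, 0)`. -/
theorem C2_only_integral_point (t x : ℤ) :
    x ^ 3 - t ^ 2 * x + t ^ 2 = 0 ↔ t = 0 ∧ x = 0 := by
  refine ⟨fun h => ?_, by rintro ⟨rfl, rfl⟩; ring⟩
  have hdvd : x - 1 ∣ x ^ 3 := ⟨t ^ 2, by linear_combination h⟩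
  rcases Int.isUnit_iff.mp (isUnit_of_dvd_one (sub_one_dvd_one_of_dvd_pow hdvd)) with hx | hx
  · have hx2 : x = 2 := by linarith
    subst hx2
    exact absurd (by linear_combination -h) (Int.sq_ne_eight t)
  · have hx0 : x = 0 := by linarith
    subst hx0
    exact ⟨pow_eq_zero_iff two_ne_zero |>.mp (by linear_combination h), rfl⟩
end

section
/- If (t, x) is an integer solution of x^4 + 2t^2x^2 - 8t^2x + t^4 = 0 with t ≥ 0, then (t, x) = (2, 2) or t ≤ 1. -/
/-! Writing the equation as `(x² + t²)² = 8t²x`, the inequality `4t²x² ≤ (x² + t²)²` gives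
`x² ≤ 2x`, i.e. `0 ≤ x ≤ 2`, as soon as `t ≠ 0`; then `t⁴ ≤ 8t²x ≤ 16t²` gives `t² ≤ 16`.
The finitely many remaining pairs are checked directly. -/

section OrderedRing

variable {R : Type*} [CommRing R] [LinearOrder R] [IsStrictOrderedRing R] {t x : R}

theorem mem_Icc_zero_two_of_sq_add_sq_sq_eq (ht : t ≠ 0) (h : (x ^ 2 + t ^ 2) ^ 2 = 8 * t ^ 2 * x) :
    x ∈ Set.Icc 0 2 := by
  have hmul : t ^ 2 * x ^ 2 ≤ t ^ 2 * (2 * x) := by nlinarith [sq_nonneg (x ^ 2 - t ^ 2)]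
  have hx : x ^ 2 ≤ 2 * x := le_of_mul_le_mul_left hmul (by positivity)
  constructor <;> nlinarith

theorem sq_le_sixteen_of_sq_add_sq_sq_eq (ht : t ≠ 0) (h : (x ^ 2 + t ^ 2) ^ 2 = 8 * t ^ 2 * x) :
    t ^ 2 ≤ 16 := by
  obtain ⟨hx0, hx2⟩ := mem_Icc_zero_two_of_sq_add_sq_sq_eq ht h
  have hmul : t ^ 2 * t ^ 2 ≤ t ^ 2 * 16 := by nlinarith [sq_nonneg x, sq_nonneg t]
  exact le_of_mul_le_mul_left hmul (by positivity)

end OrderedRing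

theorem Int.eq_zero_or_eq_two_of_sq_add_sq_sq_eq {t x : ℤ} (ht : 0 ≤ t)
    (h : (x ^ 2 + t ^ 2) ^ 2 = 8 * t ^ 2 * x) : (t = 0 ∧ x = 0) ∨ (t = 2 ∧ x = 2) := by
  rcases eq_or_ne t 0 with rfl | ht0
  · left
    simpa using h
  obtain ⟨hx0, hx2⟩ := mem_Icc_zero_two_of_sq_add_sq_sq_eq ht0 h
  have ht4 : t ≤ 4 := abs_le_of_sq_le_sq' (by simpa using sq_le_sixteen_of_sq_add_sq_sq_eq ht0 h)
    (by norm_num) |>.2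
  interval_cases x <;> interval_cases t <;> omega

/-- If `(t, x)` is an integer solution of `x⁴ + 2t²x² - 8t²x + t⁴ = 0` with `t ≥ 0`,
then `(t, x) = (2, 2)` or `t ≤ 1`. -/
theorem dQ_integral_points (t x : ℤ) (ht : 0 ≤ t)
    (h : x ^ 4 + 2 * t ^ 2 * x ^ 2 - 8 * t ^ 2 * x + t ^ 4 = 0) :
    (t = 2 ∧ x = 2) ∨ t ≤ 1 := by
  have hsq : (x ^ 2 + t ^ 2) ^ 2 = 8 * t ^ 2 * x := by linear_combination h
  rcases Int.eq_zero_or_eq_two_of_sq_add_sq_sq_eq ht hsq with ⟨rfl, -⟩ | h22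
  · exact Or.inr zero_le_one
  · exact Or.inl h22
end

section
/- Every unit of the ring ℤ[√2] is of the form ±(1+√2)^n for some integer n. -/
/-!
The units of `ℤ[√2]` have norm `±1`, and `1 + √2` has norm `-1`, so multiplying by it if necessary
reduces to units of norm `1`, i.e. solutions of the Pell equation `x² - 2y² = 1`. The smallest
nontrivial solution is `3 + 2√2 = (1 + √2)²`, and by the structure theorem for Pell equations every
solution is `±` a power of it.
-/

/-- The fundamental unit `1 + √2` of `ℤ[√2]`, with inverse `-1 + √2`. -/
def fundUnit : (ℤ√2)ˣ where
  val := ⟨1, 1⟩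
  inv := ⟨-1, 1⟩
  val_inv := by ext <;> simp
  inv_val := by ext <;> simp

theorem Zsqrtd.norm_units_eq_one_or_neg_one {d : ℤ} (u : (ℤ√d)ˣ) :
    (u : ℤ√d).norm = 1 ∨ (u : ℤ√d).norm = -1 :=
  Int.isUnit_iff.mp <| (Zsqrtd.isUnit_iff_norm_isUnit _).mp u.isUnit

theorem norm_fundUnit : (fundUnit : ℤ√2).norm = -1 := by
  simp [fundUnit, Zsqrtd.norm_def]

namespace Pell.Solution₁

variable {d : ℤ}

def toUnits : Solution₁ d →* (ℤ√d)ˣ := Unitary.toUnits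

@[simp]
theorem coe_toUnits (a : Solution₁ d) : (toUnits a : ℤ√d) = a := rfl

theorem toUnits_neg (a : Solution₁ d) : toUnits (-a) = -toUnits a := Units.ext rfl

end Pell.Solution₁

def pellTwoFundSolution : Pell.Solution₁ 2 := .mk 3 2 (by norm_num)

theorem isFundamental_pellTwoFundSolution : Pell.IsFundamental pellTwoFundSolution := by
  refine ⟨by norm_num [pellTwoFundSolution], by norm_num [pellTwoFundSolution], fun {b} hb => ?_⟩
  show 3 ≤ b.x
  by_contra! hx
  -- the only candidate below `3` is `x = 2`, and `4 - 2y² = 1` has no integer solution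
  have h := b.prop
  rw [show b.x = 2 by omega] at h
  omega

theorem toUnits_pellTwoFundSolution :
    Pell.Solution₁.toUnits pellTwoFundSolution = fundUnit ^ 2 := by
  ext <;> simp [pellTwoFundSolution, fundUnit, sq]

theorem exists_eq_zpow_or_neg_zpow_of_norm_eq_one {v : (ℤ√2)ˣ} (h : (v : ℤ√2).norm = 1) :
    ∃ n : ℤ, v = fundUnit ^ (2 * n) ∨ v = -(fundUnit ^ (2 * n)) := by
  let s : Pell.Solution₁ 2 := ⟨v, Zsqrtd.norm_eq_one_iff_mem_unitary.mp h⟩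
  have hs : Pell.Solution₁.toUnits s = v := Units.ext rfl
  obtain ⟨n, hn⟩ := isFundamental_pellTwoFundSolution.eq_zpow_or_neg_zpow s
  refine ⟨n, ?_⟩
  have hpow : Pell.Solution₁.toUnits (pellTwoFundSolution ^ n) = fundUnit ^ (2 * n) := by
    rw [map_zpow, toUnits_pellTwoFundSolution, zpow_mul, zpow_ofNat]
  rcases hn with hn | hn
  · exact .inl (by rw [← hs, hn, hpow])
  · exact .inr (by rw [← hs, hn, Pell.Solution₁.toUnits_neg, hpow])

/-- Every unit of `ℤ[√2]` is of the form `±(1 + √2)^n` for some integer `n`. -/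
theorem units_of_Zsqrt2 (u : (ℤ√2)ˣ) :
    ∃ n : ℤ, u = fundUnit ^ n ∨ u = -(fundUnit ^ n) := by
  rcases Zsqrtd.norm_units_eq_one_or_neg_one u with h | h
  · obtain ⟨n, hn⟩ := exists_eq_zpow_or_neg_zpow_of_norm_eq_one h
    exact ⟨2 * n, hn⟩
  · have h' : ((u * fundUnit : (ℤ√2)ˣ) : ℤ√2).norm = 1 := by
      rw [Units.val_mul, Zsqrtd.norm_mul, h, norm_fundUnit]
      norm_num
    obtain ⟨n, hn⟩ := exists_eq_zpow_or_neg_zpow_of_norm_eq_one h'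
    refine ⟨2 * n - 1, ?_⟩
    simpa only [zpow_sub_one, ← neg_mul, eq_mul_inv_iff_mul_eq] using hn
end

section
/- On the elliptic curve E: y^2 = x^3 + 503844x - 45019744 over ℚ, the point P = (88, 0) is a 2-torsion point, its 2-division polynomial d_{2,P}(x) = φ_2(x) - 88·ψ_2^2(x) factors as ((x - 814)(x + 638))^2 up to a constant, yet neither 814 nor -638 is the x-coordinate of a rational point on E; hence P is not divisible by 2 in E(ℚ) even though d_{2,P} has rational roots. -/
/-! If `2Q = P` with `Q = (x, y)` affine, the tangent construction gives `φ₂(x) = x(2Q) · ψ₂²(x)`,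
so `x` is a root of `d_{2,P} = φ₂ - x(P) ψ₂²` and at the same time the `x`-coordinate of a point
of `E`. For `P = (88, 0)` the roots are `814` and `-638`, and neither lifts to a rational point. -/

open Polynomial

noncomputable def Wex : WeierstrassCurve ℚ := ⟨0, 0, 0, 503844, -45019744⟩

namespace WeierstrassCurve

open WeierstrassCurve.Affine

variable {R F : Type*} [CommRing R] [Field F]

/-- `d_{2,P} = φ₂ - x(P) ψ₂²` for a point `P` with `X`-coordinate `xP`. -/
noncomputable def twoDivisionPolynomial (W : WeierstrassCurve R) (xP : R) : R[X] :=
  W.Φ 2 - C xP * W.ΨSq 2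

lemma eval_twoDivisionPolynomial_of_a₁_a₂_a₃_eq_zero (W : WeierstrassCurve R) (xP x : R)
    (h₁ : W.a₁ = 0) (h₂ : W.a₂ = 0) (h₃ : W.a₃ = 0) :
    (W.twoDivisionPolynomial xP).eval x =
      (x ^ 4 - 2 * W.a₄ * x ^ 2 - 8 * W.a₆ * x + W.a₄ ^ 2)
        - xP * (4 * (x ^ 3 + W.a₄ * x + W.a₆)) := by
  simp only [twoDivisionPolynomial, Φ_two, ΨSq_two, Ψ₂Sq, b₂, b₄, b₆, b₈, h₁, h₂, h₃, eval_sub,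
    eval_add, eval_mul, eval_pow, eval_C, eval_X]
  ring

lemma eval_Ψ₂Sq_eq_sq {W : WeierstrassCurve R} {x y : R} (h : W.toAffine.Equation x y) :
    W.Ψ₂Sq.eval x = (y - W.toAffine.negY x y) ^ 2 := by
  rw [equation_iff] at h
  simp only [Ψ₂Sq, b₂, b₄, b₆, negY, eval_add, eval_mul, eval_pow, eval_C, eval_X]
  linear_combination (-4) * h

lemma eval_Φ_two_eq_addX_mul_eval_Ψ₂Sq [DecidableEq F] {W : WeierstrassCurve F} {x y : F}
    (h : W.toAffine.Equation x y) (hy : y ≠ W.toAffine.negY x y) :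
    (W.Φ 2).eval x = W.toAffine.addX x x (W.toAffine.slope x x y y) * W.Ψ₂Sq.eval x := by
  have hℓ : W.toAffine.slope x x y y * (y - W.toAffine.negY x y) =
      3 * x ^ 2 + 2 * W.a₂ * x + W.a₄ - W.a₁ * y := by
    rw [slope_of_Y_ne rfl hy]
    exact div_mul_cancel₀ _ (sub_ne_zero.mpr hy)
  rw [eval_Ψ₂Sq_eq_sq h]
  rw [equation_iff] at h
  simp only [Φ_two, b₄, b₆, b₈, addX, negY, eval_sub, eval_mul, eval_pow, eval_C, eval_X] at hℓ ⊢
  -- the two sides differ by `(b₂ + 8x)` times the curve equation once `ℓψ₂` is replaced by the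
  -- numerator of the tangent slope
  linear_combination (-(W.toAffine.slope x x y y * (2 * y + W.a₁ * x + W.a₃)
    + (3 * x ^ 2 + 2 * W.a₂ * x + W.a₄ - W.a₁ * y) + W.a₁ * (2 * y + W.a₁ * x + W.a₃))) * hℓ
    + (W.a₁ ^ 2 + 4 * W.a₂ + 8 * x) * h

lemma exists_equation_eval_twoDivisionPolynomial_eq_zero [DecidableEq F]
    {W : WeierstrassCurve F} {xP yP : F} {hP : W.toAffine.Nonsingular xP yP}
    {Q : W.toAffine.Point} (hQ : Q + Q = .some xP yP hP) :
    ∃ x y, W.toAffine.Equation x y ∧ (W.twoDivisionPolynomial xP).eval x = 0 := by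
  rcases Q with _ | ⟨x, y, h⟩
  · exact absurd (hQ.symm.trans (zero_add 0)) (Point.some_ne_zero hP)
  by_cases hy : y = W.toAffine.negY x y
  · rw [Point.add_self_of_Y_eq hy] at hQ
    exact absurd hQ.symm (Point.some_ne_zero hP)
  rw [Point.add_self_of_Y_ne hy, Point.some.injEq] at hQ
  refine ⟨x, y, h.1, ?_⟩
  rw [twoDivisionPolynomial, eval_sub, eval_mul, eval_C, ΨSq_two,
    eval_Φ_two_eq_addX_mul_eval_Ψ₂Sq h.1 hy, hQ.1, sub_self]

end WeierstrassCurve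

lemma Wex_equation_iff (x y : ℚ) :
    Wex.toAffine.Equation x y ↔ y ^ 2 = x ^ 3 + 503844 * x - 45019744 := by
  rw [WeierstrassCurve.Affine.equation_iff]
  simp only [Wex]
  constructor <;> intro h <;> linear_combination h

lemma Wex_nonsingular_88_0 : Wex.toAffine.Nonsingular 88 0 := by
  rw [WeierstrassCurve.Affine.nonsingular_iff, Wex_equation_iff]
  norm_num [Wex]

lemma Wex_eval_twoDivisionPolynomial_88 (x : ℚ) :
    (Wex.twoDivisionPolynomial 88).eval x = ((x - 814) * (x + 638)) ^ 2 := by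
  rw [WeierstrassCurve.eval_twoDivisionPolynomial_of_a₁_a₂_a₃_eq_zero _ _ _ rfl rfl rfl]
  simp only [Wex]
  ring

lemma Wex_not_equation_814 (y : ℚ) : ¬ Wex.toAffine.Equation 814 y := by
  rw [Wex_equation_iff]
  intro h
  -- `814³ + 503844·814 - 45019744 = 904462416` lies strictly between `30074²` and `30075²`
  have hsq : IsSquare ((904462416 : ℕ) : ℚ) := ⟨y, by push_cast; linear_combination -h⟩
  obtain ⟨t, ht⟩ := Rat.isSquare_natCast_iff.mp hsq
  exact Nat.not_exists_sq (m := 30074) (by norm_num) (by norm_num) ⟨t, ht.symm⟩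

lemma Wex_not_equation_neg_638 (y : ℚ) : ¬ Wex.toAffine.Equation (-638) y := by
  rw [Wex_equation_iff]
  intro h
  nlinarith [sq_nonneg y]

/-- On `E : y² = x³ + 503844x - 45019744` over `ℚ`, the point `P = (88, 0)` is a
nonsingular `2`-torsion point, its `2`-division polynomial
`d_{2,P}(x) = φ₂(x) - 88·ψ₂²(x)` (with `φ₂(x) = x⁴ - 2Ax² - 8Bx + A²` and
`ψ₂²(x) = 4(x³ + Ax + B)`) equals `((x - 814)(x + 638))²`, yet neither `814` nor `-638`
is the `x`-coordinate of a rational point on `E`; hence `P` is not divisible by `2` in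
`E(ℚ)` even though `d_{2,P}` has rational roots. -/
theorem two_torsion_division_polynomial_counterexample :
    ∃ h : Wex.toAffine.Nonsingular 88 0,
      (WeierstrassCurve.Affine.Point.some 88 0 h + WeierstrassCurve.Affine.Point.some 88 0 h = 0) ∧
      (∀ x : ℚ,
        (x ^ 4 - 2 * 503844 * x ^ 2 - 8 * (-45019744) * x + 503844 ^ 2)
            - 88 * (4 * (x ^ 3 + 503844 * x + (-45019744)))
          = ((x - 814) * (x + 638)) ^ 2) ∧
      (∀ y : ℚ, ¬ Wex.toAffine.Equation 814 y ∧ ¬ Wex.toAffine.Equation (-638) y) ∧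
      ¬ ∃ Q : Wex.toAffine.Point, Q + Q = WeierstrassCurve.Affine.Point.some 88 0 h := by
  refine ⟨Wex_nonsingular_88_0, WeierstrassCurve.Affine.Point.add_self_of_Y_eq (by simp [Wex]),
    fun x ↦ by ring, fun y ↦ ⟨Wex_not_equation_814 y, Wex_not_equation_neg_638 y⟩, ?_⟩
  rintro ⟨Q, hQ⟩
  obtain ⟨x, y, hxy, hx⟩ := WeierstrassCurve.exists_equation_eval_twoDivisionPolynomial_eq_zero hQ
  rw [Wex_eval_twoDivisionPolynomial_88, sq_eq_zero_iff, mul_eq_zero, sub_eq_zero,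
    add_eq_zero_iff_eq_neg] at hx
  rcases hx with rfl | rfl
  · exact Wex_not_equation_814 y hxy
  · exact Wex_not_equation_neg_638 y hxy
end
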